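/- Decomposition of the answer set of a query into finitely many neighborhood types (semantic form of the decomposition lemma): Let φ(x₁,…,x_k) be a first-order formula over σ with k free variables, r = 2^{|φ|}, and let 𝒜 be a finite σ-structure. Then there exists a finite list S of finite σ-structures expanded with k constants such that for every k-tuple ā of elements of 𝒜: 𝒜 ⊨ φ(ā) if and only if 𝒩_r(ā) is isomorphic to some member of S. In particular, the answer set φ(𝒜) = {ā : 𝒜 ⊨ φ(ā)} is a union of classes of the equivalence relation 'ā ∼ b̄ iff 𝒩_r(ā) ≃ 𝒩_r(b̄)'. -/

import Mathlib

open FirstOrder FirstOrder.Language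

/-- The Gaifman graph of a structure `M` over a relational language `L`: two distinct
elements are adjacent iff they occur together in some tuple of some relation. -/
def gaifmanGraph (L : Language) (M : Type*) [L.Structure M] : SimpleGraph M where
  Adj a b := a ≠ b ∧ ∃ (n : ℕ) (R : L.Relations n) (t : Fin n → M),
      Structure.RelMap R t ∧ (∃ i, t i = a) ∧ (∃ j, t j = b)
  symm := by
    constructor
    rintro a b ⟨hab, n, R, t, ht, hi, hj⟩
    exact ⟨hab.symm, n, R, t, ht, hj, hi⟩
  loopless := by constructor; rintro a ⟨h, -⟩; exact h rfl

/-- Gaifman distance between two elements (`⊤` if not connected). -/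
noncomputable def gdist (L : Language) {M : Type*} [L.Structure M] (a b : M) : ℕ∞ :=
  (gaifmanGraph L M).edist a b

/-- Gaifman distance between two tuples: the minimum of the pairwise distances. -/
noncomputable def tdist (L : Language) {M : Type*} [L.Structure M] {ι κ : Type*}
    (a : ι → M) (b : κ → M) : ℕ∞ :=
  ⨅ (i : ι) (j : κ), gdist L (a i) (b j)

/-- `N_r(ā)`: the set of elements at Gaifman distance at most `r` from the tuple `a`. -/
def ball (L : Language) {M : Type*} [L.Structure M] (r : ℕ) {ι : Type*} (a : ι → M) :
    Set M :=
  { b | ∃ i, gdist L (a i) b ≤ r }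

lemma mem_ball_self (L : Language) {M : Type*} [L.Structure M] (r : ℕ) {ι : Type*}
    (a : ι → M) (i : ι) : a i ∈ ball L r a :=
  ⟨i, by simp [gdist, SimpleGraph.edist_self]⟩

/-- The induced structure on a subset of a structure over a relational language. -/
instance inducedStructure (L : Language) [L.IsRelational] {M : Type*} [L.Structure M]
    (s : Set M) : L.Structure s where
  funMap f _ := isEmptyElim f
  RelMap R t := Structure.RelMap R (fun i => (t i : M))

/-- `𝒩_r(ā) ≃ 𝒩_r(b̄)` : the substructures induced on the `r`-neighborhoods of the
tuples `a` and `b`, expanded with one constant per coordinate, are isomorphic,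
i.e. there is an `L`-isomorphism of the induced structures mapping `a i` to `b i`
for each `i`. -/
def NbhdIso (L : Language) [L.IsRelational] {M : Type*} [L.Structure M] (r : ℕ)
    {ι : Type*} (a b : ι → M) : Prop :=
  ∃ g : (ball L r a) ≃[L] (ball L r b),
    ∀ i, (g ⟨a i, mem_ball_self L r a i⟩ : M) = b i

/-- The size (number of symbols) of a first-order formula. -/
def fsize {L : Language} {α : Type*} : ∀ {n : ℕ}, L.BoundedFormula α n → ℕ
  | _, BoundedFormula.falsum => 1
  | _, BoundedFormula.equal _ _ => 3
  | _, @BoundedFormula.rel _ _ _ m _ _ => m + 1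
  | _, BoundedFormula.imp f g => fsize f + fsize g + 1
  | _, BoundedFormula.all f => fsize f + 1

/-- `G` has all degrees at most `d`. -/
def DegLE {V : Type*} (G : SimpleGraph V) (d : ℕ) : Prop :=
  ∀ v : V, (G.neighborSet v).encard ≤ d

/-- A finite `L`-structure expanded with `k` distinguished constants. -/
structure PointedStr (L : Language) (k : ℕ) where
  carrier : Type
  [str : L.Structure carrier]
  finite : Finite carrier
  pts : Fin k → carrier

attribute [instance] PointedStr.str

/-!
Within one finite structure, a first-order formula cannot distinguish tuples whose
`r`-neighbourhoods are isomorphic, for `r = rad φ ≤ 2 ^ |φ|`; the list `S` then consists of the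
neighbourhoods of the finitely many answers.

Locality is proved by induction on `φ`, transporting `φ` along a partial isomorphism `f` of
neighbourhoods. At `∀` with radius `3r + 1`, a new element `d` on the target side gets a partner
`c` such that the extended tuples have isomorphic `r`-neighbourhoods: if `d` is within `2r + 1` of
the target tuple, `c = f⁻¹ d` and `f` still works; otherwise some iterate `f^[k] d` leaves the
`(2r + 1)`-neighbourhood of the source tuple (`f` is injective there and `d` is not in its image,
so the orbit cannot stay in a finite set), giving a `c` far from the source tuple with
`𝒩_r(c) ≃ 𝒩_r(d)`, and the two isomorphisms glue since the balls are not adjacent.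
The radius grows as `r ↦ 3r + 1` only at quantifiers over occurring variables, and the potential
`rad φ · 2 ^ #(occurring free variables)` stays below `2 ^ |φ|`.
-/

open Set

section Gaifman

variable {L : Language} {M : Type*} [L.Structure M] {ι κ : Type*}

@[simp] lemma gdist_self (a : M) : gdist L a a = 0 := SimpleGraph.edist_self

lemma gdist_comm (a b : M) : gdist L a b = gdist L b a := SimpleGraph.edist_comm

lemma gdist_triangle (a b c : M) : gdist L a c ≤ gdist L a b + gdist L b c :=
  SimpleGraph.edist_triangle

lemma gdist_le_one_of_relMap {n : ℕ} {R : L.Relations n} {a : Fin n → M}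
    (h : Structure.RelMap R a) (i j : Fin n) : gdist L (a i) (a j) ≤ 1 := by
  rcases eq_or_ne (a i) (a j) with hij | hij
  · simp [hij]
  · have hadj : (gaifmanGraph L M).Adj (a i) (a j) :=
      ⟨hij, n, R, a, h, ⟨i, rfl⟩, ⟨j, rfl⟩⟩
    exact (SimpleGraph.edist_eq_one_iff_adj.2 hadj).le

lemma ball_subset_ball_of_margin {x : ι → M} {w : κ → M} {r R : ℕ}
    (hw : ∀ j, ∃ i, gdist L (x i) (w j) + r ≤ R) : ball L r w ⊆ ball L R x := by
  rintro e ⟨j, hj⟩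
  obtain ⟨i, hi⟩ := hw j
  exact ⟨i, (gdist_triangle _ (w j) _).trans ((add_le_add le_rfl hj).trans hi)⟩

lemma one_lt_gdist_of_far {x : ι → M} {c u w : M} {r : ℕ}
    (hc : ∀ i, ((2 * r + 1 : ℕ) : ℕ∞) < gdist L (x i) c) (hu : u ∈ ball L r x)
    (hw : w ∈ ball L r (fun _ : Unit => c)) : 1 < gdist L u w := by
  obtain ⟨i, hi⟩ := hu
  obtain ⟨_, hw⟩ := hw
  by_contra! huw
  refine (hc i).not_ge ?_
  calc gdist L (x i) c ≤ gdist L (x i) u + gdist L u w + gdist L w c :=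
        (gdist_triangle _ w _).trans (add_le_add (gdist_triangle _ u _) le_rfl)
    _ ≤ r + 1 + r := add_le_add (add_le_add hi huw) (by rwa [gdist_comm])
    _ = ((2 * r + 1 : ℕ) : ℕ∞) := by push_cast; ring

end Gaifman

/-- An isomorphism between the substructures induced on `s` and `t`, encoded as a function on
all of `M` so that restricting, composing and gluing need no subtype bookkeeping. -/
structure IsPartialIso (L : Language) {M : Type*} [L.Structure M] (s t : Set M) (f : M → M) :
    Prop where
  bijOn : BijOn f s t
  relMap_comp_iff : ∀ {n : ℕ} (R : L.Relations n) (a : Fin n → M), (∀ i, a i ∈ s) →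
    (Structure.RelMap R (f ∘ a) ↔ Structure.RelMap R a)

namespace IsPartialIso

variable {L : Language} {M : Type*} [L.Structure M] {ι κ : Type*} {s t u : Set M} {f g : M → M}

lemma comp (hf : IsPartialIso L s t f) (hg : IsPartialIso L t u g) :
    IsPartialIso L s u (g ∘ f) :=
  ⟨hg.bijOn.comp hf.bijOn, fun R a ha =>
    (hg.relMap_comp_iff R (f ∘ a) fun i => hf.bijOn.mapsTo (ha i)).trans
      (hf.relMap_comp_iff R a ha)⟩

lemma exists_inverse (hf : IsPartialIso L s t f) :
    ∃ g, IsPartialIso L t s g ∧ InvOn g f s t := by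
  rcases isEmpty_or_nonempty M with hM | hM
  · simp only [eq_empty_of_isEmpty]
    exact ⟨id, ⟨bijOn_empty _, fun _ _ _ => Iff.rfl⟩,
      by simp [InvOn, LeftInvOn, RightInvOn]⟩
  have hinv := hf.bijOn.invOn_invFunOn
  have hbij := hf.bijOn.symm hinv.symm
  refine ⟨Function.invFunOn f s, ⟨hbij, fun R a ha => ?_⟩, hinv⟩
  rw [← hf.relMap_comp_iff R (Function.invFunOn f s ∘ a) fun i => hbij.mapsTo (ha i)]
  exact iff_of_eq (congrArg _ (funext fun i => hinv.2 (ha i)))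

lemma piecewise {s₁ s₂ t₁ t₂ : Set M} {f₁ f₂ : M → M} [DecidablePred (· ∈ s₁)]
    (h₁ : IsPartialIso L s₁ t₁ f₁) (h₂ : IsPartialIso L s₂ t₂ f₂)
    (hs : ∀ a ∈ s₁, ∀ b ∈ s₂, 1 < gdist L a b)
    (ht : ∀ a ∈ t₁, ∀ b ∈ t₂, 1 < gdist L a b) :
    IsPartialIso L (s₁ ∪ s₂) (t₁ ∪ t₂) (s₁.piecewise f₁ f₂) := by
  have disj {p q : Set M} (h : ∀ a ∈ p, ∀ b ∈ q, 1 < gdist L a b) : Disjoint p q :=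
    Set.disjoint_left.2 fun a hp hq => by simpa using h a hp a hq
  have e₁ : EqOn (s₁.piecewise f₁ f₂) f₁ s₁ := piecewise_eqOn _ _ _
  have e₂ : EqOn (s₁.piecewise f₁ f₂) f₂ s₂ :=
    (piecewise_eqOn_compl _ _ _).mono (disj hs).subset_compl_left
  have b₁ := h₁.bijOn.congr e₁.symm
  have b₂ := h₂.bijOn.congr e₂.symm
  refine ⟨b₁.union b₂ ((injOn_union (disj hs)).2 ⟨b₁.injOn, b₂.injOn, ?_⟩),
    fun R a ha => ?_⟩
  · exact fun a ha b hb hab =>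
      Set.disjoint_left.1 (disj ht) (b₁.mapsTo ha) (hab ▸ b₂.mapsTo hb)
  by_cases ha₁ : ∀ i, a i ∈ s₁
  · rw [← h₁.relMap_comp_iff R a ha₁]
    exact iff_of_eq (congrArg _ (funext fun i => e₁ (ha₁ i)))
  by_cases ha₂ : ∀ i, a i ∈ s₂
  · rw [← h₂.relMap_comp_iff R a ha₂]
    exact iff_of_eq (congrArg _ (funext fun i => e₂ (ha₂ i)))
  push Not at ha₁ ha₂
  obtain ⟨i, hi⟩ := ha₁
  obtain ⟨j, hj⟩ := ha₂
  have hi₂ : a i ∈ s₂ := (ha i).resolve_left hi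
  have hj₁ : a j ∈ s₁ := (ha j).resolve_right hj
  exact iff_of_false
    (fun h =>
      (ht _ (b₁.mapsTo hj₁) _ (b₂.mapsTo hi₂)).not_ge (gdist_le_one_of_relMap h j i))
    (fun h => (hs _ hj₁ _ hi₂).not_ge (gdist_le_one_of_relMap h j i))

lemma adj_map (hf : IsPartialIso L s t f) {a b : M} (hab : (gaifmanGraph L M).Adj a b)
    (hs : ∀ c, gdist L a c ≤ 1 → c ∈ s) : (gaifmanGraph L M).Adj (f a) (f b) := by
  obtain ⟨hne, n, R, c, hc, ⟨i, rfl⟩, ⟨j, rfl⟩⟩ := hab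
  have hcs : ∀ m, c m ∈ s := fun m => hs _ (gdist_le_one_of_relMap hc i m)
  exact ⟨fun h => hne (hf.bijOn.injOn (hcs i) (hcs j) h), n, R, f ∘ c,
    (hf.relMap_comp_iff R c hcs).2 hc, ⟨i, rfl⟩, ⟨j, rfl⟩⟩

lemma gdist_map_le_length {x : ι → M} {R : ℕ} (hf : IsPartialIso L (ball L R x) t f) (i : ι)
    {a b : M} (p : (gaifmanGraph L M).Walk a b) (hp : gdist L (x i) a + p.length ≤ R) :
    gdist L (f a) (f b) ≤ p.length := by
  induction p with
  | nil => simp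
  | @cons a c b hac p ih =>
    rw [SimpleGraph.Walk.length_cons, Nat.cast_add, Nat.cast_one] at hp ⊢
    have hR : gdist L (x i) a + 1 ≤ R := le_trans (by gcongr; exact le_add_self) hp
    have hfac : gdist L (f a) (f c) ≤ 1 :=
      (SimpleGraph.edist_eq_one_iff_adj.2 (hf.adj_map hac fun d hd =>
        ⟨i, (gdist_triangle _ a _).trans ((add_le_add le_rfl hd).trans hR)⟩)).le
    have hc : gdist L (x i) c + p.length ≤ R := by
      refine le_trans ?_ hp
      calc gdist L (x i) c + p.length ≤ gdist L (x i) a + 1 + p.length := by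
            gcongr
            exact (gdist_triangle _ a _).trans
              (add_le_add le_rfl (SimpleGraph.edist_eq_one_iff_adj.2 hac).le)
        _ = _ := by ring
    calc gdist L (f a) (f b) ≤ gdist L (f a) (f c) + gdist L (f c) (f b) := gdist_triangle _ _ _
      _ ≤ 1 + p.length := add_le_add hfac (ih hc)
      _ = p.length + 1 := add_comm _ _

lemma gdist_map_le {x : ι → M} {R : ℕ} (hf : IsPartialIso L (ball L R x) t f) (i : ι)
    {a b : M} (h : gdist L (x i) a + gdist L a b ≤ R) : gdist L (f a) (f b) ≤ gdist L a b := by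
  rcases eq_or_ne (gdist L a b) ⊤ with htop | htop
  · simp [htop]
  obtain ⟨p, hp⟩ := SimpleGraph.exists_walk_of_edist_ne_top htop
  rw [show gdist L a b = p.length from hp.symm] at h ⊢
  exact hf.gdist_map_le_length i p h

lemma mapsTo_ball {x : ι → M} {w : κ → M} {r R : ℕ} (hf : IsPartialIso L (ball L R x) t f)
    (hw : ∀ j, ∃ i, gdist L (x i) (w j) + r ≤ R) :
    MapsTo f (ball L r w) (ball L r (f ∘ w)) := by
  rintro e ⟨j, hj⟩
  obtain ⟨i, hi⟩ := hw j
  exact ⟨j, (hf.gdist_map_le i ((add_le_add le_rfl hj).trans hi)).trans hj⟩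

end IsPartialIso

/-- The function-level form of `NbhdIso`. -/
structure IsNbhdIso (L : Language) {M : Type*} [L.Structure M] {ι : Type*} (r : ℕ)
    (a b : ι → M) (f : M → M) : Prop extends IsPartialIso L (ball L r a) (ball L r b) f where
  map_point : ∀ i, f (a i) = b i

namespace IsNbhdIso

variable {L : Language} {M : Type*} [L.Structure M] {ι κ : Type*} {r R : ℕ} {x y : ι → M}
  {f g : M → M}

lemma id (r : ℕ) (x : ι → M) : IsNbhdIso L r x x id :=
  ⟨⟨bijOn_id _, fun _ _ _ => Iff.rfl⟩, fun _ => rfl⟩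

lemma comp {z : ι → M} (hf : IsNbhdIso L r x y f) (hg : IsNbhdIso L r y z g) :
    IsNbhdIso L r x z (g ∘ f) :=
  ⟨hf.toIsPartialIso.comp hg.toIsPartialIso, fun i => by simp [hf.map_point, hg.map_point]⟩

lemma exists_inverse (hf : IsNbhdIso L r x y f) :
    ∃ g, IsNbhdIso L r y x g ∧ InvOn g f (ball L r x) (ball L r y) := by
  obtain ⟨g, hg, hinv⟩ := hf.toIsPartialIso.exists_inverse
  exact ⟨g, ⟨hg, fun i => hf.map_point i ▸ hinv.1 (mem_ball_self L r x i)⟩, hinv⟩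

lemma restrict (hf : IsNbhdIso L R x y f) {w w' : κ → M}
    (hw : ∀ j, ∃ i, gdist L (x i) (w j) + r ≤ R) (hw' : ∀ j, f (w j) = w' j) :
    IsNbhdIso L r w w' f := by
  obtain rfl : w' = f ∘ w := funext fun j => (hw' j).symm
  obtain ⟨g, hg, hinv⟩ := hf.exists_inverse
  have hsub := ball_subset_ball_of_margin hw
  have hw_img : ∀ j, ∃ i, gdist L (y i) (f (w j)) + r ≤ R := fun j => by
    obtain ⟨i, hi⟩ := hw j
    refine ⟨i, le_trans ?_ hi⟩
    rw [← hf.map_point i]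
    exact add_le_add (hf.gdist_map_le i (by simpa using le_self_add.trans hi)) le_rfl
  -- surjectivity: the inverse maps `ball r (f ∘ w)` back into `ball r w` by the same argument
  have hgfw : g ∘ f ∘ w = w := funext fun j => hinv.1 (hsub (mem_ball_self L r w j))
  have hback := hgfw ▸ hg.mapsTo_ball hw_img
  refine ⟨⟨⟨hf.mapsTo_ball hw, hf.bijOn.injOn.mono hsub, fun e he => ?_⟩,
    fun R a ha => hf.relMap_comp_iff R a fun i => hsub (ha i)⟩, fun _ => rfl⟩
  exact ⟨g e, hback he, hinv.2 (ball_subset_ball_of_margin hw_img he)⟩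

lemma mono (hf : IsNbhdIso L R x y f) (hr : r ≤ R) : IsNbhdIso L r x y f :=
  hf.restrict (fun i => ⟨i, by simpa using hr⟩) hf.map_point

end IsNbhdIso

lemma FirstOrder.Language.Equiv.exists_isPartialIso {L : Language} [L.IsRelational]
    {M : Type*} [L.Structure M] {s t : Set M} (g : s ≃[L] t) :
    ∃ f, IsPartialIso L s t f ∧ ∀ e : s, f e = g e := by
  classical
  set f : M → M := fun e => if h : e ∈ s then (g ⟨e, h⟩ : M) else e
  have hf : ∀ e : s, f e = g e := fun e => dif_pos e.2
  refine ⟨f, ⟨⟨fun e he => ?_, fun a ha b hb hab => ?_, fun e he => ?_⟩,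
    fun R a ha => ?_⟩, hf⟩
  · rw [hf ⟨e, he⟩]; exact (g _).2
  · rw [hf ⟨a, ha⟩, hf ⟨b, hb⟩] at hab
    exact congrArg Subtype.val (g.injective (Subtype.ext hab))
  · exact ⟨g.symm ⟨e, he⟩, (g.symm _).2, by rw [hf]; simp⟩
  · rw [show f ∘ a = fun i => (g ⟨a i, ha i⟩ : M) from funext fun i => hf ⟨a i, ha i⟩]
    exact g.map_rel R fun i => ⟨a i, ha i⟩

lemma NbhdIso.exists_isNbhdIso {L : Language} [L.IsRelational] {M : Type*} [L.Structure M]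
    {ι : Type*} {r : ℕ} {a b : ι → M} (h : NbhdIso L r a b) : ∃ f, IsNbhdIso L r a b f := by
  obtain ⟨g, hg⟩ := h
  obtain ⟨f, hf, hfg⟩ := g.exists_isPartialIso
  exact ⟨f, hf, fun i => (hfg _).trans (hg i)⟩

lemma Function.exists_iterate_notMem_of_injOn {α : Type*} [Finite α] {f : α → α} {s : Set α}
    (hf : InjOn f s) {d : α} (hd : d ∉ f '' s) :
    ∃ k, f^[k] d ∉ s ∧ ∀ m < k, f^[m] d ∈ s := by
  classical
  have hex : ∃ k, f^[k] d ∉ s := by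
    by_contra! hall
    set T := range fun k => f^[k] d
    have hT : T ⊆ s := range_subset_iff.2 hall
    have hmaps : MapsTo f T T := by
      rintro _ ⟨k, rfl⟩
      exact ⟨k + 1, Function.iterate_succ_apply' f k d⟩
    obtain ⟨e, he, hfe⟩ :=
      ((T.toFinite.injOn_iff_bijOn_of_mapsTo hmaps).1 (hf.mono hT)).surjOn ⟨0, rfl⟩
    exact hd ⟨e, hT he, hfe⟩
  exact ⟨Nat.find hex, Nat.find_spec hex, fun m hm => not_not.1 (Nat.find_min hex hm)⟩

namespace IsNbhdIso

variable {L : Language} {M : Type*} [L.Structure M] {ι : Type*} {r : ℕ} {x y : ι → M}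
  {f : M → M}

lemma iterate (hf : IsNbhdIso L (3 * r + 1) x y f) {d : M} :
    ∀ {k : ℕ}, (∀ m < k, ∃ i, gdist L (x i) (f^[m] d) ≤ (2 * r + 1 : ℕ)) →
      IsNbhdIso L r (fun _ : Unit => d) (fun _ : Unit => f^[k] d) f^[k]
  | 0, _ => IsNbhdIso.id r _
  | k + 1, hk => by
    have hstep : IsNbhdIso L r (fun _ : Unit => f^[k] d) (fun _ : Unit => f^[k + 1] d) f := by
      obtain ⟨i, hi⟩ := hk k k.lt_succ_self
      exact hf.restrict (fun _ => ⟨i, (add_le_add hi le_rfl).trans (by norm_cast; omega)⟩)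
        fun _ => (Function.iterate_succ_apply' f k d).symm
    have h := (hf.iterate fun m hm => hk m (hm.trans k.lt_succ_self)).comp hstep
    rwa [← Function.iterate_succ'] at h

lemma exists_far_copy [Finite M] (hf : IsNbhdIso L (3 * r + 1) x y f) {d : M}
    (hd : ∀ i, ((2 * r + 1 : ℕ) : ℕ∞) < gdist L (y i) d) :
    ∃ c, (∀ i, ((2 * r + 1 : ℕ) : ℕ∞) < gdist L (x i) c) ∧
      ∃ h, IsNbhdIso L r (fun _ : Unit => c) (fun _ : Unit => d) h := by
  set near := {e | ∃ i, gdist L (x i) e ≤ (2 * r + 1 : ℕ)}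
  have hnear : near ⊆ ball L (3 * r + 1) x := fun e ⟨i, hi⟩ =>
    ⟨i, hi.trans (by norm_cast; omega)⟩
  have hd_notMem : d ∉ f '' near := by
    rintro ⟨e, ⟨i, hi⟩, rfl⟩
    refine (hd i).not_ge ?_
    rw [← hf.map_point i]
    exact (hf.gdist_map_le i (by simpa using hi.trans (by norm_cast; omega))).trans hi
  obtain ⟨k, hk, hlt⟩ :=
    Function.exists_iterate_notMem_of_injOn (hf.bijOn.injOn.mono hnear) hd_notMem
  obtain ⟨h, hh, -⟩ := (hf.iterate hlt).exists_inverse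
  refine ⟨f^[k] d, fun i => ?_, h, hh⟩
  by_contra! hi
  exact hk ⟨i, hi⟩

end IsNbhdIso

section Snoc

variable {α M N : Type*} {n : ℕ}

lemma forall_elim_snoc {P : M → N → Prop} {v : α → M} {v' : α → N} {xs : Fin n → M}
    {xs' : Fin n → N} {c : M} {d : N} (h : ∀ i, P (Sum.elim v xs i) (Sum.elim v' xs' i))
    (hcd : P c d) : ∀ j, P (Sum.elim v (Fin.snoc xs c) j) (Sum.elim v' (Fin.snoc xs' d) j)
  | .inl a => h (.inl a)
  | .inr j => by
    induction j using Fin.lastCases with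
    | last => simpa using hcd
    | cast j => simpa using h (.inr j)

lemma ball_elim_snoc {L : Language} [L.Structure M] (r : ℕ) (v : α → M) (xs : Fin n → M)
    (c : M) : ball L r (Sum.elim v (Fin.snoc xs c)) =
      ball L r (Sum.elim v xs) ∪ ball L r (fun _ : Unit => c) := by
  ext e
  simp [ball, Fin.exists_fin_succ', or_assoc]

end Snoc

namespace IsNbhdIso

variable {L : Language} {M : Type*} [L.Structure M] {r : ℕ} {f : M → M} {α : Type*} {n : ℕ}
  {v v' : α → M} {xs xs' : Fin n → M}

theorem exists_snoc [Finite M]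
    (hf : IsNbhdIso L (3 * r + 1) (Sum.elim v xs) (Sum.elim v' xs') f) (d : M) :
    ∃ c g, IsNbhdIso L r (Sum.elim v (Fin.snoc xs c)) (Sum.elim v' (Fin.snoc xs' d)) g := by
  by_cases hnear : ∃ i, gdist L (Sum.elim v' xs' i) d ≤ (2 * r + 1 : ℕ)
  · obtain ⟨i, hi⟩ := hnear
    obtain ⟨g, hg, hinv⟩ := hf.exists_inverse
    have hd : d ∈ ball L (3 * r + 1) (Sum.elim v' xs') := ⟨i, hi.trans (by norm_cast; omega)⟩
    have hgd : gdist L (Sum.elim v xs i) (g d) ≤ (2 * r + 1 : ℕ) := by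
      rw [← hg.map_point i]
      exact (hg.gdist_map_le i (by simpa using hi.trans (by norm_cast; omega))).trans hi
    exact ⟨g d, f, hf.restrict (forall_elim_snoc (v' := v') (xs' := xs') (d := d)
      (P := fun a _ => ∃ i, gdist L (Sum.elim v xs i) a + r ≤ (3 * r + 1 : ℕ))
      (fun i => ⟨i, by rw [gdist_self, zero_add]; norm_cast; omega⟩)
      ⟨i, (add_le_add hgd le_rfl).trans (by norm_cast; omega)⟩)
      (forall_elim_snoc (P := fun a b => f a = b) hf.map_point (hinv.2 hd))⟩
  · push Not at hnear
    obtain ⟨c, hc, h, hh⟩ := hf.exists_far_copy hnear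
    classical
    have hcx : c ∉ ball L r (Sum.elim v xs) := fun ⟨i, hi⟩ =>
      (hc i).not_ge (hi.trans (by norm_cast; omega))
    refine ⟨c, (ball L r (Sum.elim v xs)).piecewise f h, ⟨?_, ?_⟩⟩
    · rw [ball_elim_snoc, ball_elim_snoc]
      exact (hf.mono (by omega)).toIsPartialIso.piecewise hh.toIsPartialIso
        (fun a ha b hb => one_lt_gdist_of_far hc ha hb)
        (fun a ha b hb => one_lt_gdist_of_far hnear ha hb)
    · exact forall_elim_snoc (P := fun a b => (ball L r (Sum.elim v xs)).piecewise f h a = b)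
        (fun i => by rw [piecewise_eq_of_mem _ _ _ (mem_ball_self L r _ i)]; exact hf.map_point i)
        (by rw [piecewise_eq_of_notMem _ _ _ hcx]; exact hh.map_point ())

lemma snoc_self (hf : IsNbhdIso L r (Sum.elim v xs) (Sum.elim v' xs') f) (j : α ⊕ Fin n) :
    IsNbhdIso L r (Sum.elim v (Fin.snoc xs (Sum.elim v xs j)))
      (Sum.elim v' (Fin.snoc xs' (Sum.elim v' xs' j))) f :=
  hf.restrict (forall_elim_snoc (v' := v') (xs' := xs') (d := Sum.elim v' xs' j)
      (P := fun a _ => ∃ i, gdist L (Sum.elim v xs i) a + r ≤ r)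
      (fun i => ⟨i, by simp⟩) ⟨j, by simp⟩)
    (forall_elim_snoc (P := fun a b => f a = b) hf.map_point (hf.map_point j))

end IsNbhdIso

namespace FirstOrder.Language

variable {L : Language} [L.IsRelational] {α M : Type*} [L.Structure M]

lemma Term.exists_eq_var {β : Type*} (t : L.Term β) : ∃ b, t = var b := by
  cases t with
  | var b => exact ⟨b, rfl⟩
  | func f _ => exact isEmptyElim f

/-- The indices in `Fin n` (the variables not yet bound by a quantifier) occurring in a term. -/
def Term.usedVars {n : ℕ} : L.Term (α ⊕ Fin n) → Finset (Fin n)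
  | var (.inl _) => ∅
  | var (.inr i) => {i}
  | func f _ => isEmptyElim f

lemma Term.card_usedVars_le {n : ℕ} (t : L.Term (α ⊕ Fin n)) : t.usedVars.card ≤ 1 := by
  obtain ⟨b | i, rfl⟩ := t.exists_eq_var <;> simp [usedVars]

lemma Term.realize_congr_usedVars {n : ℕ} (t : L.Term (α ⊕ Fin n)) (v : α → M)
    {xs xs' : Fin n → M} (h : ∀ i ∈ t.usedVars, xs i = xs' i) :
    t.realize (Sum.elim v xs) = t.realize (Sum.elim v xs') := by
  obtain ⟨b | i, rfl⟩ := t.exists_eq_var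
  · rfl
  · exact h i (by simp [usedVars])

namespace BoundedFormula

def usedVars : ∀ {n : ℕ}, L.BoundedFormula α n → Finset (Fin n)
  | _, falsum => ∅
  | _, equal t₁ t₂ => t₁.usedVars ∪ t₂.usedVars
  | _, rel _ ts => Finset.univ.biUnion fun i => (ts i).usedVars
  | _, imp φ ψ => φ.usedVars ∪ ψ.usedVars
  | _, all φ => Finset.univ.filter fun i => i.castSucc ∈ φ.usedVars

/-- Without the case split on occurrence the radius would outgrow `2 ^ fsize φ` already
on `∀∀⊥`. -/
def localityRadius : ∀ {n : ℕ}, L.BoundedFormula α n → ℕ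
  | _, falsum | _, equal _ _ | _, rel _ _ => 1
  | _, imp φ ψ => max φ.localityRadius ψ.localityRadius
  | n, all φ => if Fin.last n ∈ φ.usedVars then 3 * φ.localityRadius + 1 else φ.localityRadius

lemma one_le_localityRadius {n : ℕ} (φ : L.BoundedFormula α n) : 1 ≤ φ.localityRadius := by
  induction φ with
  | falsum | equal | rel => simp [localityRadius]
  | imp φ ψ ihφ _ => exact ihφ.trans (le_max_left _ _)
  | all φ ih => simp only [localityRadius]; split_ifs <;> omega

lemma card_usedVars_all_le {n : ℕ} (φ : L.BoundedFormula α (n + 1)) :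
    φ.all.usedVars.card ≤ φ.usedVars.card :=
  Finset.card_le_card_of_injOn Fin.castSucc (fun i hi => by simpa [usedVars] using hi)
    (Fin.castSucc_injective n).injOn

lemma card_usedVars_all_lt {n : ℕ} {φ : L.BoundedFormula α (n + 1)}
    (h : Fin.last n ∈ φ.usedVars) : φ.all.usedVars.card < φ.usedVars.card := by
  rw [← Finset.card_map Fin.castSuccEmb]
  refine Finset.card_lt_card ((Finset.ssubset_iff_of_subset fun i hi => ?_).2
    ⟨Fin.last n, h, by simp [Fin.castSucc_ne_last]⟩)
  obtain ⟨j, hj, rfl⟩ := Finset.mem_map.1 hi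
  simpa [usedVars] using hj

/-- The potential that makes the radius bound go through: binding an occurring variable
multiplies the radius by less than `4` but halves `2 ^ #usedVars`. -/
lemma localityRadius_mul_le {n : ℕ} (φ : L.BoundedFormula α n) :
    φ.localityRadius * 2 ^ φ.usedVars.card ≤ 2 ^ fsize φ := by
  induction φ with
  | falsum => simp [localityRadius, usedVars, fsize]
  | equal t₁ t₂ =>
    have hcard : (t₁.usedVars ∪ t₂.usedVars).card ≤ 3 :=
      (Finset.card_union_le _ _).trans (by linarith [t₁.card_usedVars_le, t₂.card_usedVars_le])
    simpa [localityRadius, usedVars, fsize] using Nat.pow_le_pow_right two_pos hcard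
  | @rel _ l R ts =>
    have hcard : (Finset.univ.biUnion fun i => (ts i).usedVars).card ≤ l + 1 :=
      Finset.card_biUnion_le.trans
        ((Finset.sum_le_card_nsmul _ _ 1 fun i _ => (ts i).card_usedVars_le).trans (by simp))
    simpa [localityRadius, usedVars, fsize] using Nat.pow_le_pow_right two_pos hcard
  | imp φ ψ ihφ ihψ =>
    have hmax : max φ.localityRadius ψ.localityRadius ≤ φ.localityRadius * ψ.localityRadius :=
      max_le (Nat.le_mul_of_pos_right _ ψ.one_le_localityRadius)
        (Nat.le_mul_of_pos_left _ φ.one_le_localityRadius)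
    calc max φ.localityRadius ψ.localityRadius * 2 ^ (φ.usedVars ∪ ψ.usedVars).card
        ≤ φ.localityRadius * ψ.localityRadius * 2 ^ (φ.usedVars.card + ψ.usedVars.card) :=
          Nat.mul_le_mul hmax (Nat.pow_le_pow_right two_pos (Finset.card_union_le _ _))
      _ = (φ.localityRadius * 2 ^ φ.usedVars.card) *
            (ψ.localityRadius * 2 ^ ψ.usedVars.card) := by ring
      _ ≤ 2 ^ fsize φ * 2 ^ fsize ψ := Nat.mul_le_mul ihφ ihψ
      _ ≤ 2 ^ fsize (φ.imp ψ) := by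
          rw [← pow_add]; exact Nat.pow_le_pow_right two_pos (by simp [fsize])
  | all φ ih =>
    simp only [localityRadius, fsize, pow_succ]
    split_ifs with h
    · have hlt := card_usedVars_all_lt h
      calc (3 * φ.localityRadius + 1) * 2 ^ φ.all.usedVars.card
          ≤ 2 * (φ.localityRadius * 2 ^ (φ.all.usedVars.card + 1)) := by
            have := φ.one_le_localityRadius
            rw [pow_succ]; nlinarith [Nat.two_pow_pos φ.all.usedVars.card]
        _ ≤ 2 * (φ.localityRadius * 2 ^ φ.usedVars.card) := by gcongr <;> omega
        _ ≤ 2 ^ fsize φ * 2 := by linarith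
    · calc φ.localityRadius * 2 ^ φ.all.usedVars.card
          ≤ φ.localityRadius * 2 ^ φ.usedVars.card := by
            gcongr
            exacts [one_le_two, card_usedVars_all_le φ]
        _ ≤ 2 ^ fsize φ * 2 := ih.trans (Nat.le_mul_of_pos_right _ two_pos)

lemma localityRadius_le {n : ℕ} (φ : L.BoundedFormula α n) :
    φ.localityRadius ≤ 2 ^ fsize φ :=
  (Nat.le_mul_of_pos_right _ (Nat.two_pow_pos _)).trans φ.localityRadius_mul_le

lemma realize_congr_usedVars {n : ℕ} (φ : L.BoundedFormula α n) (v : α → M) :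
    ∀ {xs xs' : Fin n → M}, (∀ i ∈ φ.usedVars, xs i = xs' i) →
      (φ.Realize v xs ↔ φ.Realize v xs') := by
  induction φ with
  | falsum => exact fun _ => Iff.rfl
  | equal t₁ t₂ =>
    intro xs xs' h
    simp only [usedVars, Finset.mem_union] at h
    simp only [Realize, t₁.realize_congr_usedVars v fun i hi => h i (.inl hi),
      t₂.realize_congr_usedVars v fun i hi => h i (.inr hi)]
  | rel R ts =>
    intro xs xs' h
    simp only [usedVars, Finset.mem_biUnion, Finset.mem_univ, true_and] at h
    simp only [Realize, fun j => (ts j).realize_congr_usedVars v fun i hi => h i ⟨j, hi⟩]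
  | imp φ ψ ihφ ihψ =>
    intro xs xs' h
    simp only [usedVars, Finset.mem_union] at h
    simp only [realize_imp, ihφ fun i hi => h i (.inl hi), ihψ fun i hi => h i (.inr hi)]
  | all φ ih =>
    intro xs xs' h
    simp only [usedVars, Finset.mem_filter, Finset.mem_univ, true_and] at h
    refine forall_congr' fun d => ih fun i hi => ?_
    induction i using Fin.lastCases with
    | last => simp
    | cast i => simpa using h i hi

lemma realize_snoc_congr {n : ℕ} {φ : L.BoundedFormula α (n + 1)}
    (h : Fin.last n ∉ φ.usedVars) (v : α → M) (xs : Fin n → M) (c d : M) :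
    φ.Realize v (Fin.snoc xs c) ↔ φ.Realize v (Fin.snoc xs d) :=
  φ.realize_congr_usedVars v fun i hi => by
    induction i using Fin.lastCases with
    | last => exact absurd hi h
    | cast i => simp

theorem realize_of_isNbhdIso [Finite M] {n : ℕ} (φ : L.BoundedFormula α n) :
    ∀ {v v' : α → M} {xs xs' : Fin n → M} {f : M → M},
      IsNbhdIso L φ.localityRadius (Sum.elim v xs) (Sum.elim v' xs') f →
      φ.Realize v xs → φ.Realize v' xs' := by
  induction φ with
  | falsum => exact fun _ => id
  | equal t₁ t₂ =>
    intro v v' xs xs' f hf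
    obtain ⟨b₁, rfl⟩ := t₁.exists_eq_var
    obtain ⟨b₂, rfl⟩ := t₂.exists_eq_var
    simp only [Realize, Term.realize_var, ← hf.map_point]
    exact congrArg f
  | rel R ts =>
    intro v v' xs xs' f hf
    choose b hb using fun i => (ts i).exists_eq_var
    obtain rfl : ts = fun i => Term.var (b i) := funext hb
    simp only [Realize, Term.realize_var, ← hf.map_point]
    exact (hf.relMap_comp_iff R (Sum.elim v xs ∘ b) fun i => mem_ball_self L _ _ (b i)).2
  | imp φ ψ ihφ ihψ =>
    intro v v' xs xs' f hf
    obtain ⟨g, hg, -⟩ := (hf.mono (le_max_left _ _)).exists_inverse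
    exact fun h hφ => ihψ (hf.mono (le_max_right _ _)) (h (ihφ hg hφ))
  | @all n φ ih =>
    intro v v' xs xs' f hf
    simp only [realize_all]
    intro h d
    simp only [localityRadius] at hf
    split_ifs at hf with hused
    · obtain ⟨c, g, hg⟩ := hf.exists_snoc d
      exact ih hg (h c)
    rcases isEmpty_or_nonempty (α ⊕ Fin n) with hempty | ⟨⟨j⟩⟩
    · obtain rfl : v = v' := funext fun a => isEmptyElim (Sum.inl a : α ⊕ Fin n)
      obtain rfl : xs = xs' := funext fun i => isEmptyElim (Sum.inr i : α ⊕ Fin n)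
      exact h d
    · exact (realize_snoc_congr hused v' xs' _ d).1 (ih (hf.snoc_self j) (h _))

end BoundedFormula

lemma Formula.realize_of_nbhdIso [Finite M] {k : ℕ} (φ : L.Formula (Fin k)) {r : ℕ}
    (hr : 2 ^ fsize φ ≤ r) {a b : Fin k → M} (h : NbhdIso L r a b) :
    φ.Realize a → φ.Realize b := by
  obtain ⟨f, hf⟩ := h.exists_isNbhdIso
  refine BoundedFormula.realize_of_isNbhdIso φ (xs := default) (xs' := default) (f := f)
    (hf.restrict ?_ ?_)
  · rintro (i | i)
    · exact ⟨i, by simpa using (φ.localityRadius_le.trans hr)⟩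
    · exact i.elim0
  · rintro (i | i)
    · exact hf.map_point i
    · exact i.elim0

end FirstOrder.Language

section PointedNbhd

variable {M : Type*} [Finite M] {k : ℕ}

/-- `𝒩_r(a)` as a pointed structure, transported to `Fin (Nat.card N_r(a))` so that its
carrier lives in `Type`. -/
noncomputable def pointedNbhd (L : Language) [L.IsRelational] [L.Structure M] (r : ℕ)
    (a : Fin k → M) : PointedStr L k where
  carrier := Fin (Nat.card (ball L r a))
  str := (Finite.equivFin (ball L r a)).inducedStructure
  finite := inferInstance
  pts j := Finite.equivFin _ ⟨a j, mem_ball_self L r a j⟩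

noncomputable def pointedNbhdEquiv {L : Language} [L.IsRelational] [L.Structure M]
    (r : ℕ) (a : Fin k → M) : ball L r a ≃[L] (pointedNbhd L r a).carrier :=
  (Finite.equivFin _).inducedStructureEquiv

lemma nbhdIso_of_equiv_pointedNbhd {L : Language} [L.IsRelational] [L.Structure M]
    {r : ℕ} {a b : Fin k → M} (g : ball L r a ≃[L] (pointedNbhd L r b).carrier)
    (hg : ∀ j, g ⟨a j, mem_ball_self L r a j⟩ = (pointedNbhd L r b).pts j) :
    NbhdIso L r b a :=
  ⟨g.symm.comp (pointedNbhdEquiv r b), fun j => by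
    change (g.symm ((pointedNbhd L r b).pts j) : M) = a j
    rw [← hg, g.symm_apply_apply]⟩

end PointedNbhd

theorem answer_set_decomposition_general {L : Language} [L.IsRelational]
    {M : Type*} [L.Structure M] [Finite M]
    {k : ℕ} (φ : L.Formula (Fin k)) (r : ℕ) (hr : r = 2 ^ fsize φ) :
    ∃ (N : ℕ) (S : Fin N → PointedStr L k),
      (∀ a : Fin k → M, φ.Realize a ↔
        ∃ (i : Fin N) (g : (ball L r a) ≃[L] (S i).carrier),
          ∀ j : Fin k, g ⟨a j, mem_ball_self L r a j⟩ = (S i).pts j) ∧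
      (∀ a b : Fin k → M, NbhdIso L r a b → (φ.Realize a → φ.Realize b)) := by
  have hlocal (a b : Fin k → M) : NbhdIso L r a b → φ.Realize a → φ.Realize b :=
    φ.realize_of_nbhdIso hr.ge
  obtain ⟨N, ⟨e⟩⟩ := Finite.exists_equiv_fin {a : Fin k → M // φ.Realize a}
  refine ⟨N, fun i => pointedNbhd L r (e.symm i).1, fun a => ⟨fun ha => ?_, ?_⟩, hlocal⟩
  · refine ⟨e ⟨a, ha⟩, ?_⟩
    beta_reduce
    rw [e.symm_apply_apply]
    exact ⟨pointedNbhdEquiv r a, fun j => rfl⟩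
  · rintro ⟨i, g, hg⟩
    exact hlocal _ _ (nbhdIso_of_equiv_pointedNbhd g hg) (e.symm i).2

/-- **Decomposition of the answer set of a query into finitely many neighborhood types.**
Let `φ(x₁,…,x_k)` be a first-order formula over the finite relational signature `L`,
`r = 2 ^ |φ|`, and `M` a finite `L`-structure. Then there is a finite list `S` of finite
`L`-structures expanded with `k` constants such that for every `k`-tuple `a` of elements
of `M`: `M ⊨ φ(a)` iff `𝒩_r(a)` is isomorphic to some member of `S`. In particular, the
answer set `φ(M)` is a union of classes of the equivalence relation
`a ∼ b ↔ 𝒩_r(a) ≃ 𝒩_r(b)`. -/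
theorem answer_set_decomposition {L : Language} [L.IsRelational]
    [Finite (Σ n, L.Relations n)] {M : Type*} [L.Structure M] [Finite M]
    {k : ℕ} (φ : L.Formula (Fin k)) (r : ℕ) (hr : r = 2 ^ fsize φ) :
    ∃ (N : ℕ) (S : Fin N → PointedStr L k),
      (∀ a : Fin k → M, φ.Realize a ↔
        ∃ (i : Fin N) (g : (ball L r a) ≃[L] (S i).carrier),
          ∀ j : Fin k, g ⟨a j, mem_ball_self L r a j⟩ = (S i).pts j) ∧
      (∀ a b : Fin k → M, NbhdIso L r a b → (φ.Realize a → φ.Realize b)) :=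
  answer_set_decomposition_general φ r hr
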